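/- Converse extended differentiability: let u : Ω → ℝ be convex on an open set Ω ⊆ ℝⁿ, differentiable at x, and suppose there is a linear map A : ℝⁿ → ℝⁿ such that ess sup_{‖w‖≤δ}‖∇u(x+w) − ∇u(x) − Aw‖/‖w‖ → 0 as δ → 0⁺. Then for all small w, ∂u(x+w) ⊆ {∇u(x) + Aw} + o(‖w‖)·𝔹. -/

import Mathlib

open RealInnerProductSpace Filter Metric MeasureTheory Topology

/-- The subdifferential of `u` at `x` relative to `Ω`: all `p` such that
`u (x+h) ≥ u x + ⟪p, h⟫` whenever the segment `[x, x+h]` lies in `Ω`. -/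
def subdiff {n : ℕ} (Ω : Set (EuclideanSpace ℝ (Fin n))) (u : EuclideanSpace ℝ (Fin n) → ℝ)
    (x : EuclideanSpace ℝ (Fin n)) : Set (EuclideanSpace ℝ (Fin n)) :=
  {p | ∀ h : EuclideanSpace ℝ (Fin n), segment ℝ x (x + h) ⊆ Ω → u x + ⟪p, h⟫ ≤ u (x + h)}

theorem grad_subgrad {n : ℕ} {Ω : Set (EuclideanSpace ℝ (Fin n))} {u : EuclideanSpace ℝ (Fin n) → ℝ}
    (hu : ConvexOn ℝ Ω u) (y g h : EuclideanSpace ℝ (Fin n))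
    (hg : HasGradientAt u g y) (hseg : segment ℝ y (y + h) ⊆ Ω) :
    u y + ⟪g, h⟫ ≤ u (y + h) := by
  have hline : HasDerivAt (fun t : ℝ => u (y + t • h)) ⟪g, h⟫ 0 := by
    have hcurve : HasDerivAt (fun t : ℝ => y + t • h) h 0 := by
      simpa using ((hasDerivAt_id (0:ℝ)).smul_const h).const_add y
    have hF : HasFDerivAt u (InnerProductSpace.toDual ℝ _ g) (y + (0:ℝ) • h) := by
      simpa using hg.hasFDerivAt
    simpa [InnerProductSpace.toDual_apply_apply, Function.comp_def] using hF.comp_hasDerivAt 0 hcurve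
  have key : ∀ t : ℝ, t ∈ Set.Ioc (0:ℝ) 1 →
      (u (y + t • h) - u y) / t ≤ u (y + h) - u y := by
    intro t ht
    have hy : y ∈ Ω := hseg (left_mem_segment ℝ y (y + h))
    have hyh : y + h ∈ Ω := hseg (right_mem_segment ℝ y (y + h))
    have hconv := hu.2 hy hyh (by linarith [ht.2] : (0:ℝ) ≤ 1 - t) ht.1.le (by ring)
    have hpt : (1 - t) • y + t • (y + h) = y + t • h := by module
    rw [hpt] at hconv
    rw [div_le_iff₀ ht.1]
    have : u (y + t • h) ≤ (1 - t) * u y + t * u (y + h) := hconv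
    nlinarith [ht.1]
  have hslope : Tendsto (fun t : ℝ => (u (y + t • h) - u y) / t) (𝓝[>] 0)
      (𝓝 ⟪g, h⟫) := by
    have h1 := hasDerivAt_iff_tendsto_slope.1 hline
    have h2 := h1.mono_left (nhdsWithin_mono 0
      (by intro t ht; exact ne_of_gt ht : Set.Ioi (0:ℝ) ⊆ {0}ᶜ))
    refine h2.congr' ?_
    filter_upwards [self_mem_nhdsWithin] with t ht
    simp [slope, div_eq_inv_mul]
  have hev : ∀ᶠ t in 𝓝[>] (0:ℝ), (u (y + t • h) - u y) / t ≤ u (y + h) - u y := by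
    filter_upwards [Ioc_mem_nhdsGT_of_mem ⟨le_refl (0:ℝ), zero_lt_one⟩] with t ht
    exact key t ht
  have hle := le_of_tendsto hslope hev
  linarith

set_option maxHeartbeats 1000000 in
theorem subdiff_expansion_of_extended_differentiability {n : ℕ}
    (Ω : Set (EuclideanSpace ℝ (Fin n))) (hΩ : IsOpen Ω)
    (u : EuclideanSpace ℝ (Fin n) → ℝ) (hu : ConvexOn ℝ Ω u) (hc : ContinuousOn u Ω)
    (x : EuclideanSpace ℝ (Fin n)) (hx : x ∈ Ω)
    (gx : EuclideanSpace ℝ (Fin n)) (hgx : HasGradientAt u gx x)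
    (A : EuclideanSpace ℝ (Fin n) →L[ℝ] EuclideanSpace ℝ (Fin n))
    (hyp : ∀ ε > (0 : ℝ), ∃ δ > (0 : ℝ), ∀ᵐ w : EuclideanSpace ℝ (Fin n), ‖w‖ ≤ δ →
      x + w ∈ Ω → ∀ g : EuclideanSpace ℝ (Fin n), HasGradientAt u g (x + w) →
        ‖g - gx - A w‖ ≤ ε * ‖w‖) :
    ∀ ε > (0 : ℝ), ∃ δ > (0 : ℝ), ∀ w : EuclideanSpace ℝ (Fin n), ‖w‖ ≤ δ →
      x + w ∈ Ω → ∀ p ∈ subdiff Ω u (x + w), ‖p - (gx + A w)‖ ≤ ε * ‖w‖ := by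
  simp only [subdiff, Set.mem_setOf_eq]
  intro ε hε
  obtain ⟨δ, hδ, hae⟩ := hyp ε hε
  obtain ⟨ρ0, hρ0, hball⟩ := Metric.isOpen_iff.1 hΩ x hx
  set ρ : ℝ := ρ0 / 3 with hρdef
  have hρ : 0 < ρ := by positivity
  have hsubΩ : closedBall x (2 * ρ) ⊆ Ω := by
    refine (closedBall_subset_ball ?_).trans hball
    rw [hρdef]; linarith
  -- Lipschitz on ball x ρ
  have hconv2 : ConvexOn ℝ (ball x (2 * ρ)) u :=
    hu.subset ((ball_subset_closedBall).trans hsubΩ) (convex_ball _ _)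
  have hbdd : Bornology.IsBounded (u '' ball x (2 * ρ)) := by
    have hcpt : IsCompact (u '' closedBall x (2 * ρ)) :=
      (isCompact_closedBall x (2 * ρ)).image_of_continuousOn (hc.mono hsubΩ)
    exact hcpt.isBounded.subset (Set.image_mono ball_subset_closedBall)
  obtain ⟨K, hK⟩ := hconv2.exists_lipschitzOnWith_of_isBounded
    (by linarith : ρ < 2 * ρ) hbdd
  -- Rademacher
  have hrad : ∀ᵐ y : EuclideanSpace ℝ (Fin n), y ∈ ball x ρ →
      DifferentiableWithinAt ℝ u (ball x ρ) y :=
    hK.ae_differentiableWithinAt_of_mem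
  have htr : ∀ᵐ z : EuclideanSpace ℝ (Fin n), x + z ∈ ball x ρ →
      DifferentiableWithinAt ℝ u (ball x ρ) (x + z) :=
    (measurePreserving_add_left volume x).quasiMeasurePreserving.ae hrad
  set r₀ : ℝ := min ρ δ with hr₀def
  have hr₀ : 0 < r₀ := lt_min hρ hδ
  refine ⟨r₀ / 2, by positivity, ?_⟩
  intro w hw hwΩ p hp
  set q := p - (gx + A w) with hqdef
  set F : EuclideanSpace ℝ (Fin n) → ℝ :=
    fun z => ⟪q, w - z⟫ + ε * ‖z‖ * ‖w - z‖ + ‖A‖ * (‖w - z‖ * ‖w - z‖) with hFdef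
  -- the a.e. inequality
  have hFae : ∀ᵐ z : EuclideanSpace ℝ (Fin n), z ∈ ball (0 : EuclideanSpace ℝ (Fin n)) r₀ →
      0 ≤ F z := by
    filter_upwards [hae, htr] with z h1 h2 hz
    have hzn : ‖z‖ < r₀ := by simpa using mem_ball_iff_norm.1 hz
    have hzρ : ‖z‖ < ρ := hzn.trans_le (min_le_left _ _)
    have hxz : x + z ∈ ball x ρ := by
      rw [mem_ball, dist_eq_norm]; simpa using hzρ
    have hxzΩ : x + z ∈ Ω :=
      hsubΩ (ball_subset_closedBall.trans (closedBall_subset_closedBall (by linarith)) hxz)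
    have hdiff : DifferentiableAt ℝ u (x + z) :=
      (h2 hxz).differentiableAt (isOpen_ball.mem_nhds hxz)
    have hgrad : HasGradientAt u (gradient u (x + z)) (x + z) := hdiff.hasGradientAt
    set g := gradient u (x + z) with hgdef
    have hbound : ‖g - gx - A z‖ ≤ ε * ‖z‖ :=
      h1 (hzn.le.trans (min_le_right _ _)) hxzΩ g hgrad
    -- both points in closedBall x ρ
    have hwρ : x + w ∈ closedBall x ρ := by
      rw [mem_closedBall, dist_eq_norm]
      simpa using hw.trans (by linarith [min_le_left ρ δ] : r₀ / 2 ≤ ρ)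
    have hzρ' : x + z ∈ closedBall x ρ := ball_subset_closedBall hxz
    have hsegsub : ∀ a b : EuclideanSpace ℝ (Fin n), a ∈ closedBall x ρ →
        b ∈ closedBall x ρ → segment ℝ a b ⊆ Ω := fun a b ha hb =>
      ((convex_closedBall x ρ).segment_subset ha hb).trans
        ((closedBall_subset_closedBall (by linarith)).trans hsubΩ)
    have m1 : u (x + w) + ⟪p, z - w⟫ ≤ u (x + z) := by
      have := hp (z - w) (by
        have : (x + w) + (z - w) = x + z := by abel
        rw [this]; exact hsegsub _ _ hwρ hzρ')
      have heq : (x + w) + (z - w) = x + z := by abel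
      rwa [heq] at this
    have m2 : u (x + z) + ⟪g, w - z⟫ ≤ u (x + w) := by
      have := grad_subgrad hu (x + z) g (w - z) hgrad (by
        have : (x + z) + (w - z) = x + w := by abel
        rw [this]; exact hsegsub _ _ hzρ' hwρ)
      have heq : (x + z) + (w - z) = x + w := by abel
      rwa [heq] at this
    have hsum : ⟪p, z - w⟫ + ⟪g, w - z⟫ ≤ 0 := by linarith
    have hmono : 0 ≤ ⟪p - g, w - z⟫ := by
      have e1 : ⟪p - g, w - z⟫ = -(⟪p, z - w⟫ + ⟪g, w - z⟫) := by
        rw [inner_sub_left, show w - z = -(z - w) from (neg_sub z w).symm,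
          inner_neg_right, inner_neg_right]
        ring
      rw [e1]; linarith
    set e := g - gx - A z with hedef
    have hdecomp : ⟪p - g, w - z⟫ = ⟪q, w - z⟫ + ⟪A w - A z, w - z⟫ - ⟪e, w - z⟫ := by
      have : p - g = q + (A w - A z) - e := by
        rw [hqdef, hedef]; abel
      rw [this, inner_sub_left, inner_add_left]
    have i1 : |⟪e, w - z⟫| ≤ (ε * ‖z‖) * ‖w - z‖ :=
      (abs_real_inner_le_norm _ _).trans
        (mul_le_mul_of_nonneg_right hbound (norm_nonneg _))
    have i2 : |⟪A w - A z, w - z⟫| ≤ ‖A‖ * (‖w - z‖ * ‖w - z‖) := by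
      refine (abs_real_inner_le_norm _ _).trans ?_
      rw [← mul_assoc]
      refine mul_le_mul_of_nonneg_right ?_ (norm_nonneg _)
      calc ‖A w - A z‖ = ‖A (w - z)‖ := by rw [map_sub]
        _ ≤ ‖A‖ * ‖w - z‖ := A.le_opNorm _
    have j1 := (abs_le.1 i1).1
    have j2 := (abs_le.1 i2).2
    simp only [hFdef]
    nlinarith [hmono, hdecomp]
  -- pass from a.e. to everywhere by continuity
  have hFcont : Continuous F := by
    apply Continuous.add
    apply Continuous.add
    · exact continuous_const.inner (continuous_const.sub continuous_id)
    · exact (continuous_const.mul continuous_norm).mul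
        ((continuous_const.sub continuous_id).norm)
    · exact continuous_const.mul
        (((continuous_const.sub continuous_id).norm).mul
          ((continuous_const.sub continuous_id).norm))
  have hFall : ∀ z ∈ ball (0 : EuclideanSpace ℝ (Fin n)) r₀, 0 ≤ F z := by
    by_contra hcon
    push_neg at hcon
    obtain ⟨z₀, hz₀, hz₀F⟩ := hcon
    set V := {z | F z < 0} ∩ ball (0 : EuclideanSpace ℝ (Fin n)) r₀ with hVdef
    have hVopen : IsOpen V := (isOpen_lt hFcont continuous_const).inter isOpen_ball
    have hVne : V.Nonempty := ⟨z₀, hz₀F, hz₀⟩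
    have hVpos : 0 < volume V := hVopen.measure_pos volume hVne
    have hVnull : volume V = 0 := by
      refine measure_mono_null ?_ (ae_iff.1 hFae)
      intro z hzV
      simp only [Set.mem_setOf_eq, not_forall]
      exact ⟨hzV.2, not_le.2 hzV.1⟩
    rw [hVnull] at hVpos; exact lt_irrefl _ hVpos
  -- conclude
  rcases eq_or_ne q 0 with hq0 | hq0
  · rw [hq0, norm_zero]
    positivity
  · set v := -(‖q‖⁻¹ • q) with hvdef
    have hnv : ‖v‖ = 1 := by
      rw [hvdef, norm_neg, norm_smul, norm_inv, norm_norm,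
        inv_mul_cancel₀ (norm_ne_zero_iff.2 hq0)]
    have hqv : ⟪q, v⟫ = -‖q‖ := by
      rw [hvdef, inner_neg_right, real_inner_smul_right, real_inner_self_eq_norm_mul_norm]
      field_simp
    have hstep : ∀ t : ℝ, t ∈ Set.Ioo (0:ℝ) (r₀ / 2) → ‖q‖ ≤ ε * (‖w‖ + t) + ‖A‖ * t := by
      intro t ht
      set z := w - t • v with hzdef
      have hzn : ‖z‖ ≤ ‖w‖ + t := by
        calc ‖z‖ ≤ ‖w‖ + ‖t • v‖ := norm_sub_le _ _
          _ = ‖w‖ + t := by rw [norm_smul, hnv, Real.norm_eq_abs, abs_of_pos ht.1, mul_one]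
      have hzball : z ∈ ball (0 : EuclideanSpace ℝ (Fin n)) r₀ := by
        rw [mem_ball, dist_eq_norm, sub_zero]
        have := ht.2
        linarith
      have hF := hFall z hzball
      have hwz : w - z = t • v := by rw [hzdef]; abel
      have hinner : ⟪q, w - z⟫ = -(t * ‖q‖) := by
        rw [hwz, real_inner_smul_right, hqv]; ring
      have hnwz : ‖w - z‖ = t := by
        rw [hwz, norm_smul, hnv, Real.norm_eq_abs, abs_of_pos ht.1, mul_one]
      rw [hFdef] at hF
      simp only [hinner, hnwz] at hF
      have ht0 := ht.1
      have h1 : ε * ‖z‖ * t ≤ ε * (‖w‖ + t) * t :=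
        mul_le_mul_of_nonneg_right (mul_le_mul_of_nonneg_left hzn hε.le) ht0.le
      refine le_of_mul_le_mul_right ?_ ht0
      nlinarith [hF, h1]
    refine le_of_forall_pos_le_add ?_
    intro η hη
    have hApos : (0:ℝ) ≤ ‖A‖ := norm_nonneg _
    set t := min (η / (ε + ‖A‖ + 1)) (r₀ / 4) with htdef
    have ht0 : 0 < t := lt_min (by positivity) (by positivity)
    have htr2 : t < r₀ / 2 := (min_le_right _ _).trans_lt (by linarith)
    have hstep' := hstep t ⟨ht0, htr2⟩
    have hta : t ≤ η / (ε + ‖A‖ + 1) := min_le_left _ _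
    have h2 : t * (ε + ‖A‖ + 1) ≤ η := (le_div_iff₀ (by positivity)).1 hta
    nlinarith [hstep', h2, ht0]
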